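/- arXiv:1912.08711 — 5 statements merged into one kernel-verified Lean document; each statement's English description precedes it below -/
import Mathlib

section
/- Let n ≥ 1, let A be a real symmetric positive definite n×n matrix, q ∈ ℝⁿ, e ∈ ℝⁿ a unit vector, and C > 1. Define the density m(x) := C (2π)^{−n} π^{n/2} (det A)^{−1/2} exp(−(1/4)⟨A⁻¹(x−q),(x−q)⟩) on ℝⁿ, and W(s) := (1/s) ln ∫_{ℝⁿ} e^{s x·e} m(x) dx for s > 0. Then the infimum of W over s > 0 equals 2 √(⟨Ae,e⟩ · ln C) + e·q, and the infimum is attained at s* = √((ln C)/⟨Ae,e⟩). -/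
/-!
Completing the square turns the exponential moment of the Gaussian density `m` into a shifted
Gaussian integral; the substitution `x = S y` with `S Sᵀ = A` reduces that to the standard one,
and the normalisation of `m` makes its total mass exactly `C`. Hence
`∫ e^{s x·e} m = C e^{s e·q + s² ⟨Ae,e⟩}`, i.e. `W(s) = ln C / s + s ⟨Ae,e⟩ + e·q`, and AM–GM
gives the minimum `2 √(⟨Ae,e⟩ ln C) + e·q`, attained where `ln C / s = s ⟨Ae,e⟩`.
-/

open MeasureTheory Matrix

namespace Matrix

variable {ι : Type*} [Fintype ι]

theorem integral_exp_neg_mul_dotProduct_self (b : ℝ) :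
    ∫ y : ι → ℝ, Real.exp (-b * (y ⬝ᵥ y)) = √(Real.pi / b) ^ Fintype.card ι := by
  have hprod (y : ι → ℝ) : Real.exp (-b * (y ⬝ᵥ y)) = ∏ i, Real.exp (-b * y i ^ 2) := by
    simp only [dotProduct, Finset.mul_sum, ← Real.exp_sum, sq]
  simp_rw [hprod]
  rw [volume_pi, integral_fintype_prod_eq_pow (fun t : ℝ => Real.exp (-b * t ^ 2)),
    integral_gaussian]

variable [DecidableEq ι]

theorem integral_comp_mulVec {E : Type*} [NormedAddCommGroup E] [NormedSpace ℝ E]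
    {S : Matrix ι ι ℝ} (hS : S.det ≠ 0) (g : (ι → ℝ) → E) :
    ∫ y, g (S *ᵥ y) = |S.det|⁻¹ • ∫ x, g x := by
  have hinj : LinearMap.ker (toLin' S) = ⊥ := by
    rw [LinearMap.ker_eq_bot]
    exact mulVec_injective_iff_isUnit.2 ((isUnit_iff_isUnit_det S).2 hS.isUnit)
  have hemb := (LinearMap.isClosedEmbedding_of_injective hinj).measurableEmbedding
  simp_rw [← toLin'_apply]
  rw [← hemb.integral_map, Real.map_matrix_volume_pi_eq_smul_volume_pi hS, integral_smul_measure,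
    ENNReal.toReal_ofReal (by positivity), abs_inv]

theorem sub_smul_mulVec_dotProduct_inv_mulVec {A : Matrix ι ι ℝ} (hAs : A.IsSymm)
    (hA : IsUnit A.det) (c : ℝ) (u w : ι → ℝ) :
    (u - c • A *ᵥ w) ⬝ᵥ A⁻¹ *ᵥ (u - c • A *ᵥ w) =
      u ⬝ᵥ A⁻¹ *ᵥ u - 2 * c * (u ⬝ᵥ w) + c ^ 2 * (w ⬝ᵥ A *ᵥ w) := by
  have hinv : A⁻¹ *ᵥ A *ᵥ w = w := by rw [mulVec_mulVec, nonsing_inv_mul A hA, one_mulVec]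
  have hsymm : (A *ᵥ w) ⬝ᵥ A⁻¹ *ᵥ u = u ⬝ᵥ w := by
    rw [← vecMul_transpose, hAs.eq, ← dotProduct_mulVec, mulVec_mulVec, mul_nonsing_inv A hA,
      one_mulVec, dotProduct_comm]
  simp only [mulVec_sub, mulVec_smul, hinv, sub_dotProduct, dotProduct_sub, smul_dotProduct,
    dotProduct_smul, smul_eq_mul, hsymm, dotProduct_comm (A *ᵥ w) w]
  ring

theorem dotProduct_inv_mulVec_of_mul_transpose_eq {A S : Matrix ι ι ℝ} (hA : IsUnit A.det)
    (hS : S * Sᵀ = A) (y : ι → ℝ) : (S *ᵥ y) ⬝ᵥ A⁻¹ *ᵥ (S *ᵥ y) = y ⬝ᵥ y := by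
  have hSdet : IsUnit S.det := by
    rw [← hS, det_mul] at hA
    exact isUnit_of_mul_isUnit_left hA
  have hSdetT : IsUnit Sᵀ.det := by rwa [det_transpose]
  have hid : Sᵀ * A⁻¹ * S = 1 := by
    rw [← hS, mul_inv_rev, ← Matrix.mul_assoc, mul_nonsing_inv _ hSdetT, Matrix.one_mul,
      nonsing_inv_mul _ hSdet]
  rw [mulVec_mulVec, ← vecMul_transpose, ← dotProduct_mulVec, mulVec_mulVec, ← Matrix.mul_assoc,
    hid, one_mulVec]

theorem PosSemidef.exists_mul_transpose_eq {A : Matrix ι ι ℝ} (hA : A.PosSemidef) :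
    ∃ S : Matrix ι ι ℝ, S * Sᵀ = A := by
  open scoped MatrixOrder in
  refine ⟨CFC.sqrt A, ?_⟩
  open scoped MatrixOrder in
  rw [← conjTranspose_eq_transpose_of_trivial, (CFC.sqrt_nonneg A).posSemidef.isHermitian.eq,
    CFC.sqrt_mul_sqrt_self A hA.nonneg]

theorem PosDef.integral_exp_neg_mul_dotProduct_inv_mulVec {A : Matrix ι ι ℝ} (hA : A.PosDef)
    (b : ℝ) :
    ∫ y : ι → ℝ, Real.exp (-b * (y ⬝ᵥ A⁻¹ *ᵥ y)) = √A.det * √(Real.pi / b) ^ Fintype.card ι := by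
  obtain ⟨S, hS⟩ := hA.posSemidef.exists_mul_transpose_eq
  have hdet : A.det = S.det ^ 2 := by rw [← hS, det_mul, det_transpose, sq]
  have hAdet : IsUnit A.det := hA.det_pos.ne'.isUnit
  have hSdet : S.det ≠ 0 := by
    rintro h
    simp [hdet, h] at hAdet
  have hsubst := integral_comp_mulVec hSdet fun y => Real.exp (-b * (y ⬝ᵥ A⁻¹ *ᵥ y))
  simp only [dotProduct_inv_mulVec_of_mul_transpose_eq hAdet hS,
    integral_exp_neg_mul_dotProduct_self, smul_eq_mul] at hsubst
  rw [hdet, Real.sqrt_sq_eq_abs, hsubst, mul_inv_cancel_left₀ (abs_ne_zero.2 hSdet)]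

theorem PosDef.integral_exp_mul_dotProduct_mul_exp_neg_quadratic {A : Matrix ι ι ℝ}
    (hA : A.PosDef) {b : ℝ} (hb : b ≠ 0) (s : ℝ) (e q : ι → ℝ) :
    ∫ x : ι → ℝ, Real.exp (s * (x ⬝ᵥ e)) * Real.exp (-b * ((x - q) ⬝ᵥ A⁻¹ *ᵥ (x - q))) =
      √A.det * √(Real.pi / b) ^ Fintype.card ι *
        Real.exp (s * (e ⬝ᵥ q) + s ^ 2 / (4 * b) * (e ⬝ᵥ A *ᵥ e)) := by
  set v := q + (s / (2 * b)) • A *ᵥ e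
  have hAs : A.IsSymm := isHermitian_iff_isSymm.1 hA.isHermitian
  have hsq (x : ι → ℝ) :
      Real.exp (s * (x ⬝ᵥ e)) * Real.exp (-b * ((x - q) ⬝ᵥ A⁻¹ *ᵥ (x - q))) =
        Real.exp (s * (e ⬝ᵥ q) + s ^ 2 / (4 * b) * (e ⬝ᵥ A *ᵥ e)) *
          Real.exp (-b * ((x - v) ⬝ᵥ A⁻¹ *ᵥ (x - v))) := by
    have hxv : x - v = (x - q) - (s / (2 * b)) • A *ᵥ e := by simp only [v]; abel
    rw [← Real.exp_add, ← Real.exp_add, hxv,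
      sub_smul_mulVec_dotProduct_inv_mulVec hAs hA.det_pos.ne'.isUnit, sub_dotProduct x q e,
      dotProduct_comm e q]
    congr 1
    field_simp
    ring
  simp_rw [hsq]
  rw [integral_const_mul, integral_sub_right_eq_self (fun x => Real.exp (-b * (x ⬝ᵥ A⁻¹ *ᵥ x))),
    hA.integral_exp_neg_mul_dotProduct_inv_mulVec, mul_comm]

end Matrix

namespace Real

theorem two_mul_sqrt_pi_pow_mul_pi_rpow (n : ℕ) :
    (2 * √π) ^ n * π ^ ((n : ℝ) / 2) = (2 * π) ^ n := by
  have hsqrt : √π ^ n = π ^ ((n : ℝ) / 2) := by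
    rw [sqrt_eq_rpow, ← rpow_natCast, ← rpow_mul pi_pos.le]
    ring_nf
  rw [mul_pow, mul_assoc, hsqrt, ← rpow_add pi_pos, add_halves, rpow_natCast, mul_pow]

theorem two_mul_sqrt_mul_le_div_add_mul {L a s : ℝ} (hL : 0 ≤ L) (ha : 0 ≤ a) (hs : 0 < s) :
    2 * √(a * L) ≤ L / s + s * a := by
  have hsplit : √(a * L) = √(L / s) * √(s * a) := by
    rw [← sqrt_mul (by positivity)]
    congr 1
    field_simp
  calc 2 * √(a * L) = 2 * √(L / s) * √(s * a) := by rw [hsplit, mul_assoc]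
    _ ≤ √(L / s) ^ 2 + √(s * a) ^ 2 := two_mul_le_add_sq _ _
    _ = L / s + s * a := by rw [sq_sqrt (by positivity), sq_sqrt (by positivity)]

theorem div_sqrt_div_add_sqrt_div_mul {L a : ℝ} (hL : 0 < L) (ha : 0 < a) :
    L / √(L / a) + √(L / a) * a = 2 * √(a * L) := by
  set t := √(L / a)
  have ht : 0 < t := sqrt_pos.2 (by positivity)
  have hL' : L = a * t ^ 2 := by
    rw [sq_sqrt (by positivity)]
    field_simp
  rw [hL', ← mul_assoc, sqrt_mul' _ (sq_nonneg t), sqrt_sq ht.le, sqrt_mul_self ha.le]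
  field_simp
  ring

end Real

theorem spreading_speed_local_general
    (n : ℕ) (A : Matrix (Fin n) (Fin n) ℝ)
    (hA : A.PosDef) (q : Fin n → ℝ)
    (e : Fin n → ℝ) (he : e ⬝ᵥ e = 1) (C : ℝ) (hC : 1 < C)
    (m : (Fin n → ℝ) → ℝ)
    (hm : ∀ x, m x = C * ((2 * Real.pi) ^ n)⁻¹ * Real.pi ^ ((n : ℝ) / 2) /
        Real.sqrt A.det * Real.exp (-(1 / 4) * ((x - q) ⬝ᵥ A⁻¹ *ᵥ (x - q))))
    (W : ℝ → ℝ)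
    (hW : ∀ s, W s = (1 / s) *
        Real.log (∫ x : Fin n → ℝ, Real.exp (s * (x ⬝ᵥ e)) * m x))
    (sstar : ℝ) (hsstar : sstar = Real.sqrt (Real.log C / (e ⬝ᵥ A *ᵥ e))) :
    (∀ s, 0 < s →
        2 * Real.sqrt ((e ⬝ᵥ A *ᵥ e) * Real.log C) + e ⬝ᵥ q ≤ W s) ∧
      0 < sstar ∧
      W sstar = 2 * Real.sqrt ((e ⬝ᵥ A *ᵥ e) * Real.log C) + e ⬝ᵥ q := by
  set a := e ⬝ᵥ A *ᵥ e
  have hL : 0 < Real.log C := Real.log_pos hC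
  have ha : 0 < a := hA.dotProduct_mulVec_pos (by rintro rfl; simp at he)
  have hmgf (s : ℝ) :
      ∫ x, Real.exp (s * (x ⬝ᵥ e)) * m x = C * Real.exp (s * (e ⬝ᵥ q) + s ^ 2 * a) := by
    have hquarter : √(Real.pi / (1 / 4)) = 2 * √Real.pi := by
      rw [show Real.pi / (1 / 4) = 2 ^ 2 * Real.pi by ring, Real.sqrt_mul (by norm_num),
        Real.sqrt_sq (by norm_num)]
    have hdet : 0 < √A.det := Real.sqrt_pos.2 hA.det_pos
    simp_rw [hm, mul_left_comm (Real.exp _)]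
    rw [integral_const_mul, hA.integral_exp_mul_dotProduct_mul_exp_neg_quadratic (by norm_num),
      hquarter, Fintype.card_fin, ← Real.two_mul_sqrt_pi_pow_mul_pi_rpow n]
    field_simp
    rfl
  have hWs (s : ℝ) (hs : s ≠ 0) : W s = Real.log C / s + s * a + e ⬝ᵥ q := by
    rw [hW, hmgf, Real.log_mul (by positivity) (Real.exp_pos _).ne', Real.log_exp]
    field_simp
    ring
  have hsstar_pos : 0 < sstar := hsstar ▸ Real.sqrt_pos.2 (div_pos hL ha)
  refine ⟨fun s hs => ?_, hsstar_pos, ?_⟩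
  · rw [hWs s hs.ne']
    linarith [Real.two_mul_sqrt_mul_le_div_add_mul hL.le ha.le hs]
  · rw [hWs sstar hsstar_pos.ne', hsstar, Real.div_sqrt_div_add_sqrt_div_mul hL ha]

/-- Spreading speed formula for the linearized local model: the infimum over `s > 0` of
`W(s) = (1/s) ln ∫ e^{s x·e} m(x) dx` equals `2√(⟨Ae,e⟩ ln C) + e·q` and is attained
at `s* = √(ln C / ⟨Ae,e⟩)`. -/
theorem spreading_speed_local
    (n : ℕ) (hn : 1 ≤ n) (A : Matrix (Fin n) (Fin n) ℝ)
    (hsymm : A.IsSymm) (hA : A.PosDef) (q : Fin n → ℝ)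
    (e : Fin n → ℝ) (he : e ⬝ᵥ e = 1) (C : ℝ) (hC : 1 < C)
    (m : (Fin n → ℝ) → ℝ)
    (hm : ∀ x, m x = C * ((2 * Real.pi) ^ n)⁻¹ * Real.pi ^ ((n : ℝ) / 2) /
        Real.sqrt A.det * Real.exp (-(1 / 4) * ((x - q) ⬝ᵥ A⁻¹ *ᵥ (x - q))))
    (W : ℝ → ℝ)
    (hW : ∀ s, W s = (1 / s) *
        Real.log (∫ x : Fin n → ℝ, Real.exp (s * (x ⬝ᵥ e)) * m x))
    (sstar : ℝ) (hsstar : sstar = Real.sqrt (Real.log C / (e ⬝ᵥ A *ᵥ e))) :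
    (∀ s, 0 < s →
        2 * Real.sqrt ((e ⬝ᵥ A *ᵥ e) * Real.log C) + e ⬝ᵥ q ≤ W s) ∧
      0 < sstar ∧
      W sstar = 2 * Real.sqrt ((e ⬝ᵥ A *ᵥ e) * Real.log C) + e ⬝ᵥ q :=
  spreading_speed_local_general n A hA q e he C hC m hm W hW sstar hsstar
end

section
/- Let α > 0 and β > 0. Let N > 0 and 0 < a ≤ N with a ≤ βN, and let f be a continuous function on [a, N] with 0 < f(ω) ≤ αω for all ω ∈ [a, N]. If ∫_a^N dω/f(ω) = 1, then β e^{α} ≥ 1. -/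
open MeasureTheory intervalIntegral

theorem Real.log_div_le_mul_integral_inv {α a b : ℝ} {f : ℝ → ℝ} (hα : 0 < α) (ha : 0 < a)
    (hab : a ≤ b) (hfpos : ∀ ω ∈ Set.Icc a b, 0 < f ω) (hfle : ∀ ω ∈ Set.Icc a b, f ω ≤ α * ω)
    (hf : IntervalIntegrable (fun ω => (f ω)⁻¹) volume a b) :
    Real.log (b / a) ≤ α * ∫ ω in a..b, (f ω)⁻¹ := by
  have hinv : IntervalIntegrable (fun ω => (α * ω)⁻¹) volume a b := by
    refine (continuousOn_const.mul continuousOn_id).inv₀ ?_ |>.intervalIntegrable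
    rw [Set.uIcc_of_le hab]
    exact fun ω hω => (mul_pos hα (ha.trans_le hω.1)).ne'
  calc Real.log (b / a) = α * ∫ ω in a..b, (α * ω)⁻¹ := by
        simp_rw [mul_inv]
        rw [intervalIntegral.integral_const_mul, integral_inv_of_pos ha (ha.trans_le hab),
          mul_inv_cancel_left₀ hα.ne']
    _ ≤ α * ∫ ω in a..b, (f ω)⁻¹ := by
        gcongr
        exact integral_mono_on hab hinv hf fun ω hω => inv_anti₀ (hfpos ω hω) (hfle ω hω)

theorem equilibrium_necessary_condition_general
    (α β N a : ℝ) (hα : 0 < α) (hN : 0 < N)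
    (ha : 0 < a) (haN : a ≤ N) (haβ : a ≤ β * N)
    (f : ℝ → ℝ)
    (hfpos : ∀ ω ∈ Set.Icc a N, 0 < f ω)
    (hfle : ∀ ω ∈ Set.Icc a N, f ω ≤ α * ω)
    (hint : (∫ ω in a..N, (f ω)⁻¹) = 1) :
    1 ≤ β * Real.exp α := by
  -- a nonintegrable function has interval integral `0`, not `1`
  have hf := intervalIntegrable_of_integral_ne_zero (hint ▸ one_ne_zero)
  have hlog : Real.log (N / a) ≤ α := by
    simpa [hint] using Real.log_div_le_mul_integral_inv hα ha haN hfpos hfle hf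
  have hNa : N ≤ a * Real.exp α := by
    rwa [Real.log_le_iff_le_exp (div_pos hN ha), div_le_iff₀' ha] at hlog
  refine le_of_mul_le_mul_right ?_ hN
  calc 1 * N ≤ a * Real.exp α := by rwa [one_mul]
    _ ≤ β * N * Real.exp α := by gcongr
    _ = β * Real.exp α * N := by ring

/-- Necessary condition for a positive equilibrium of the impulsive model:
if `∫_a^N dω/f(ω) = 1` with `0 < f(ω) ≤ αω` on `[a,N]`, `0 < a ≤ N` and `a ≤ βN`,
then `β e^α ≥ 1`. -/
theorem equilibrium_necessary_condition
    (α β N a : ℝ) (hα : 0 < α) (hβ : 0 < β) (hN : 0 < N)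
    (ha : 0 < a) (haN : a ≤ N) (haβ : a ≤ β * N)
    (f : ℝ → ℝ) (hf : ContinuousOn f (Set.Icc a N))
    (hfpos : ∀ ω ∈ Set.Icc a N, 0 < f ω)
    (hfle : ∀ ω ∈ Set.Icc a N, f ω ≤ α * ω)
    (hint : (∫ ω in a..N, (f ω)⁻¹) = 1) :
    1 ≤ β * Real.exp α :=
  equilibrium_necessary_condition_general α β N a hα hN ha haN haβ f hfpos hfle hint
end

section
/- Let r > 0 and 0 < s < 1 satisfy e^{r}(1−s) > 1, and define N* := ((1−s)e^{r} − 1) / ((1−s)(e^{r} − 1)). Then 0 < (1−s)N* < N* < 1 and ∫_{(1−s)N*}^{N*} dω / (r ω (1−ω)) = 1. -/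
/-!
The logistic vector field `r ω (1 - ω)` integrates explicitly: `(log-odds)/r` is an
antiderivative of its reciprocal on `(0, 1)`. So the integral condition says that the
log-odds of `N*` and of `(1 - s) N*` differ by exactly `r`, i.e.
`N* (1 - (1 - s) N*) = e^r (1 - s) N* (1 - N*)`, and this is the linear equation in `N*`
whose solution is the given formula.
-/

open MeasureTheory intervalIntegral Real Set

noncomputable def logOdds (x : ℝ) : ℝ := log x - log (1 - x)

lemma hasDerivAt_logOdds {x : ℝ} (hx0 : 0 < x) (hx1 : x < 1) :
    HasDerivAt logOdds (x * (1 - x))⁻¹ x := by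
  have hx1' : 1 - x ≠ 0 := by linarith
  have hsub : HasDerivAt (fun ω : ℝ => 1 - ω) (-1) x := by
    simpa using (hasDerivAt_id x).const_sub 1
  refine ((hasDerivAt_log hx0.ne').sub (hsub.log hx1')).congr_deriv ?_
  field_simp
  ring

lemma integral_inv_mul_one_sub {a b : ℝ} (ha0 : 0 < a) (ha1 : a < 1) (hb0 : 0 < b)
    (hb1 : b < 1) :
    ∫ ω in a..b, (ω * (1 - ω))⁻¹ = logOdds b - logOdds a := by
  have hmem : ∀ ω ∈ uIcc a b, 0 < ω ∧ ω < 1 := fun ω hω =>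
    ⟨(lt_min ha0 hb0).trans_le hω.1, hω.2.trans_lt (max_lt ha1 hb1)⟩
  refine integral_eq_sub_of_hasDerivAt
    (fun ω hω => hasDerivAt_logOdds (hmem ω hω).1 (hmem ω hω).2) ?_
  refine ContinuousOn.intervalIntegrable (ContinuousOn.inv₀ (by fun_prop) fun ω hω => ?_)
  obtain ⟨h0, h1⟩ := hmem ω hω
  exact (mul_pos h0 (by linarith)).ne'

lemma integral_inv_logistic (r : ℝ) {a b : ℝ} (ha0 : 0 < a) (ha1 : a < 1) (hb0 : 0 < b)
    (hb1 : b < 1) :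
    ∫ ω in a..b, (r * ω * (1 - ω))⁻¹ = (logOdds b - logOdds a) / r := by
  simp_rw [mul_assoc r, mul_inv r]
  rw [intervalIntegral.integral_const_mul, integral_inv_mul_one_sub ha0 ha1 hb0 hb1, inv_mul_eq_div]

lemma logOdds_sub_logOdds {x y k : ℝ} (hx0 : 0 < x) (hx1 : x < 1) (hy0 : 0 < y)
    (hy1 : y < 1) (h : y * (1 - x) = k * (x * (1 - y))) :
    logOdds y - logOdds x = log k := by
  have hx1' : 1 - x ≠ 0 := by linarith
  have hy1' : 1 - y ≠ 0 := by linarith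
  have hk : k = y * (1 - x) / (x * (1 - y)) := by
    rw [h]; field_simp
  rw [hk, log_div (by positivity) (by positivity), log_mul hy0.ne' hx1',
    log_mul hx0.ne' hy1', logOdds, logOdds]
  ring

lemma mul_one_sub_mul_eq_of_eq_div {c E N : ℝ} (hc : c ≠ 0) (hE : E ≠ 1)
    (hN : N = (c * E - 1) / (c * (E - 1))) :
    N * (1 - c * N) = E * (c * N * (1 - N)) := by
  have hE' : E - 1 ≠ 0 := sub_ne_zero.mpr hE
  subst hN
  field_simp
  ring

/-- The positive equilibrium `N* = ((1−s)e^r − 1)/((1−s)(e^r − 1))` of the impulsive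
fire–logistic model satisfies `0 < (1−s)N* < N* < 1` and
`∫_{(1−s)N*}^{N*} dω/(rω(1−ω)) = 1`. -/
theorem fire_logistic_equilibrium
    (r s : ℝ) (hr : 0 < r) (hs0 : 0 < s) (hs1 : s < 1)
    (hcond : 1 < Real.exp r * (1 - s))
    (Nstar : ℝ)
    (hNstar : Nstar = ((1 - s) * Real.exp r - 1) / ((1 - s) * (Real.exp r - 1))) :
    0 < (1 - s) * Nstar ∧ (1 - s) * Nstar < Nstar ∧ Nstar < 1 ∧
      (∫ ω in ((1 - s) * Nstar)..Nstar, (r * ω * (1 - ω))⁻¹) = 1 := by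
  have hc0 : 0 < 1 - s := by linarith
  have hc1 : 1 - s < 1 := by linarith
  have hE : 1 < exp r := one_lt_exp_iff.mpr hr
  have hden : 0 < (1 - s) * (exp r - 1) := mul_pos hc0 (by linarith)
  have hN0 : 0 < Nstar := hNstar ▸ div_pos (by linarith) hden
  have hN1 : Nstar < 1 := by
    rw [hNstar, div_lt_one hden]
    nlinarith
  have hcN : (1 - s) * Nstar < Nstar := mul_lt_of_lt_one_left hN0 hc1
  have hcN0 : 0 < (1 - s) * Nstar := mul_pos hc0 hN0
  refine ⟨hcN0, hcN, hN1, ?_⟩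
  rw [integral_inv_logistic r hcN0 (hcN.trans hN1) hN0 hN1,
    logOdds_sub_logOdds hcN0 (hcN.trans hN1) hN0 hN1
      (mul_one_sub_mul_eq_of_eq_div hc0.ne' hE.ne' hNstar),
    log_exp, div_self hr.ne']
end

section
/- Let α > 0, γ ≤ 0, and c ≥ 0. Define u : [0,1] → ℝ by u(t) := α c e^{αt} / (α − γ c (e^{αt} − 1)). Then the denominator α − γ c (e^{αt} − 1) is positive for all t ∈ [0,1], u(0) = c, u is differentiable with u'(t) = α u(t) + γ u(t)² for all t ∈ [0,1], and u(1) = α c / ((e^{−α} − 1) γ c + α e^{−α}). -/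
/-!
The formula is the classical solution of the Bernoulli (logistic) equation `u' = αu + γu²`,
obtained by solving the linear equation `v' = -αv - γ` for `v = 1/u`. Since `γc ≤ 0` and
`e^{αt} ≥ 1` for `t ≥ 0`, the denominator is at least `α > 0`; the value at `t = 1` follows by
multiplying numerator and denominator by `e^{-α}`.
-/

open Real

noncomputable section

/-- The flow of `u' = αu + γu²` from `u(0) = c`, as long as its denominator does not vanish. -/
def logisticFlow (α γ c t : ℝ) : ℝ :=
  α * c * exp (α * t) / (α - γ * c * (exp (α * t) - 1))

theorem logisticFlow_denom_pos {α γ c t : ℝ} (hα : 0 < α) (hγc : γ * c ≤ 0) (ht : 0 ≤ t) :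
    0 < α - γ * c * (exp (α * t) - 1) := by
  have hexp : 1 ≤ exp (α * t) := one_le_exp (mul_nonneg hα.le ht)
  nlinarith

theorem logisticFlow_zero {α : ℝ} (hα : α ≠ 0) (γ c : ℝ) : logisticFlow α γ c 0 = c := by
  simp [logisticFlow, hα]

theorem logisticFlow_one (α γ c : ℝ) :
    logisticFlow α γ c 1 = α * c / ((exp (-α) - 1) * γ * c + α * exp (-α)) := by
  have hscale : (exp (-α) - 1) * γ * c + α * exp (-α) = (α - γ * c * (exp α - 1)) / exp α := by
    rw [exp_neg]
    field_simp
    ring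
  rw [logisticFlow, mul_one, hscale, div_div_eq_mul_div]

theorem hasDerivAt_logisticFlow {α γ c t : ℝ} (hden : α - γ * c * (exp (α * t) - 1) ≠ 0) :
    HasDerivAt (logisticFlow α γ c)
      (α * logisticFlow α γ c t + γ * logisticFlow α γ c t ^ 2) t := by
  have hexp : HasDerivAt (fun s ↦ exp (α * s)) (exp (α * t) * α) t := by
    simpa using ((hasDerivAt_id t).const_mul α).exp
  have hquot := (hexp.const_mul (α * c)).fun_div
    (((hexp.sub_const 1).const_mul (γ * c)).const_sub α) hden
  unfold logisticFlow
  refine hquot.congr_deriv ?_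
  field_simp
  ring

/-- Explicit solution of the spatially constant impulsive model:
`u(t) = αce^{αt}/(α − γc(e^{αt} − 1))` has positive denominator on `[0,1]`,
satisfies `u(0) = c`, solves `u' = αu + γu²` on `[0,1]`, and
`u(1) = αc/((e^{−α} − 1)γc + αe^{−α})`. -/
theorem explicit_solution_nonspatial
    (α γ c : ℝ) (hα : 0 < α) (hγ : γ ≤ 0) (hc : 0 ≤ c)
    (u : ℝ → ℝ)
    (hu : ∀ t, u t = α * c * Real.exp (α * t) / (α - γ * c * (Real.exp (α * t) - 1))) :
    (∀ t ∈ Set.Icc (0 : ℝ) 1, 0 < α - γ * c * (Real.exp (α * t) - 1)) ∧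
      u 0 = c ∧
      (∀ t ∈ Set.Icc (0 : ℝ) 1, HasDerivAt u (α * u t + γ * (u t) ^ 2) t) ∧
      u 1 = α * c / ((Real.exp (-α) - 1) * γ * c + α * Real.exp (-α)) := by
  obtain rfl : u = logisticFlow α γ c := funext hu
  have hden : ∀ t ∈ Set.Icc (0 : ℝ) 1, 0 < α - γ * c * (exp (α * t) - 1) := fun t ht ↦
    logisticFlow_denom_pos hα (mul_nonpos_of_nonpos_of_nonneg hγ hc) ht.1
  exact ⟨hden, logisticFlow_zero hα.ne' γ c,
    fun t ht ↦ hasDerivAt_logisticFlow (hden t ht).ne', logisticFlow_one α γ c⟩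

end
end

section
/- Let a > 0, b > 0 and θ ∈ [0, π/2]. Then the minimum of √(a² x₁² + b² x₂²) / (x₁ cos θ + x₂ sin θ), taken over all unit vectors (x₁, x₂) ∈ ℝ² with x₁ cos θ + x₂ sin θ > 0, exists (is attained) and equals a b / √(a² sin² θ + b² cos² θ). -/
/-! The quotient is homogeneous of degree zero in `x`, so the unit-norm constraint only fixes a
representative. By the Lagrange identity
`(a²x₁² + b²x₂²)(a²s² + b²c²) - (ab(x₁c + x₂s))² = (a²x₁s - b²x₂c)²`,
Cauchy–Schwarz bounds the quotient below by `ab/√(a²s² + b²c²)`, with equality along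
`x ∥ (b²c, a²s)`. -/

open Real

noncomputable def rayQuotient (a b c s x₁ x₂ : ℝ) : ℝ :=
  √(a ^ 2 * x₁ ^ 2 + b ^ 2 * x₂ ^ 2) / (x₁ * c + x₂ * s)

theorem mul_mul_add_le_sqrt_mul_sqrt (a b c s x₁ x₂ : ℝ) :
    a * b * (x₁ * c + x₂ * s) ≤
      √(a ^ 2 * x₁ ^ 2 + b ^ 2 * x₂ ^ 2) * √(a ^ 2 * s ^ 2 + b ^ 2 * c ^ 2) := by
  have lagrange : (a ^ 2 * x₁ ^ 2 + b ^ 2 * x₂ ^ 2) * (a ^ 2 * s ^ 2 + b ^ 2 * c ^ 2) -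
      (a * b * (x₁ * c + x₂ * s)) ^ 2 = (a ^ 2 * x₁ * s - b ^ 2 * x₂ * c) ^ 2 := by ring
  rw [← sqrt_mul (by positivity)]
  exact le_sqrt_of_sq_le (sub_nonneg.mp (lagrange ▸ sq_nonneg _))

theorem mul_sq_add_mul_sq_pos {p q c s : ℝ} (hp : 0 < p) (hq : 0 < q) (hcs : c ≠ 0 ∨ s ≠ 0) :
    0 < p * s ^ 2 + q * c ^ 2 := by
  rcases hcs with hc | hs
  · linarith [mul_nonneg hp.le (sq_nonneg s), mul_pos hq (sq_pos_of_ne_zero hc)]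
  · linarith [mul_pos hp (sq_pos_of_ne_zero hs), mul_nonneg hq.le (sq_nonneg c)]

section

variable {a b c s : ℝ}

theorem rayQuotient_mul_mul {t : ℝ} (ht : 0 < t) (x₁ x₂ : ℝ) :
    rayQuotient a b c s (t * x₁) (t * x₂) = rayQuotient a b c s x₁ x₂ := by
  have hnum : a ^ 2 * (t * x₁) ^ 2 + b ^ 2 * (t * x₂) ^ 2 =
      t ^ 2 * (a ^ 2 * x₁ ^ 2 + b ^ 2 * x₂ ^ 2) := by ring
  have hden : t * x₁ * c + t * x₂ * s = t * (x₁ * c + x₂ * s) := by ring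
  rw [rayQuotient, rayQuotient, hnum, hden, sqrt_mul (sq_nonneg t), sqrt_sq ht.le,
    mul_div_mul_left _ _ ht.ne']

theorem rayQuotient_sq_mul_sq_mul (ha : 0 < a) (hb : 0 < b) :
    rayQuotient a b c s (b ^ 2 * c) (a ^ 2 * s) = a * b / √(a ^ 2 * s ^ 2 + b ^ 2 * c ^ 2) := by
  have hnum : a ^ 2 * (b ^ 2 * c) ^ 2 + b ^ 2 * (a ^ 2 * s) ^ 2 =
      (a * b) ^ 2 * (a ^ 2 * s ^ 2 + b ^ 2 * c ^ 2) := by ring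
  have hden : b ^ 2 * c * c + a ^ 2 * s * s = a ^ 2 * s ^ 2 + b ^ 2 * c ^ 2 := by ring
  rw [rayQuotient, hnum, hden, sqrt_mul (sq_nonneg _), sqrt_sq (by positivity), mul_div_assoc,
    sqrt_div_self', mul_one_div]

theorem div_sqrt_le_rayQuotient {x₁ x₂ : ℝ} (hD : 0 < a ^ 2 * s ^ 2 + b ^ 2 * c ^ 2)
    (hx : 0 < x₁ * c + x₂ * s) :
    a * b / √(a ^ 2 * s ^ 2 + b ^ 2 * c ^ 2) ≤ rayQuotient a b c s x₁ x₂ := by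
  rw [rayQuotient, div_le_div_iff₀ (sqrt_pos.2 hD) hx]
  exact mul_mul_add_le_sqrt_mul_sqrt a b c s x₁ x₂

theorem isLeast_rayQuotient (ha : 0 < a) (hb : 0 < b) (hcs : c ≠ 0 ∨ s ≠ 0) :
    IsLeast {v | ∃ x₁ x₂ : ℝ, x₁ ^ 2 + x₂ ^ 2 = 1 ∧ 0 < x₁ * c + x₂ * s ∧
        v = rayQuotient a b c s x₁ x₂}
      (a * b / √(a ^ 2 * s ^ 2 + b ^ 2 * c ^ 2)) := by
  have hD := mul_sq_add_mul_sq_pos (pow_pos ha 2) (pow_pos hb 2) hcs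
  have hN := mul_sq_add_mul_sq_pos (pow_pos ha 4) (pow_pos hb 4) hcs
  set N := √(a ^ 4 * s ^ 2 + b ^ 4 * c ^ 2)
  have hN_pos : 0 < N := sqrt_pos.2 hN
  refine ⟨⟨N⁻¹ * (b ^ 2 * c), N⁻¹ * (a ^ 2 * s), ?unit, ?pos, ?value⟩, ?lower⟩
  case unit =>
    have hN_sq : N ^ 2 = a ^ 4 * s ^ 2 + b ^ 4 * c ^ 2 := sq_sqrt hN.le
    field_simp
    linear_combination -hN_sq
  case pos =>
    have : N⁻¹ * (b ^ 2 * c) * c + N⁻¹ * (a ^ 2 * s) * s =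
        N⁻¹ * (a ^ 2 * s ^ 2 + b ^ 2 * c ^ 2) := by ring
    rw [this]
    positivity
  case value => rw [rayQuotient_mul_mul (inv_pos.2 hN_pos), rayQuotient_sq_mul_sq_mul ha hb]
  case lower =>
    rintro v ⟨x₁, x₂, -, hx, rfl⟩
    exact div_sqrt_le_rayQuotient hD hx

end

theorem ray_speed_minimization_general
    (a b θ : ℝ) (ha : 0 < a) (hb : 0 < b) :
    IsLeast
      {v : ℝ | ∃ x₁ x₂ : ℝ, x₁ ^ 2 + x₂ ^ 2 = 1 ∧
        0 < x₁ * Real.cos θ + x₂ * Real.sin θ ∧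
        v = Real.sqrt (a ^ 2 * x₁ ^ 2 + b ^ 2 * x₂ ^ 2) /
              (x₁ * Real.cos θ + x₂ * Real.sin θ)}
      (a * b / Real.sqrt (a ^ 2 * Real.sin θ ^ 2 + b ^ 2 * Real.cos θ ^ 2)) := by
  have hcs : Real.cos θ ≠ 0 ∨ Real.sin θ ≠ 0 := by
    by_contra! h
    simpa [h.1, h.2] using Real.sin_sq_add_cos_sq θ
  exact isLeast_rayQuotient ha hb hcs

/-- The Freidlin–Gärtner ray-speed minimization: for `a, b > 0` and `θ ∈ [0, π/2]`,
the minimum of `√(a²x₁² + b²x₂²)/(x₁ cos θ + x₂ sin θ)` over unit vectors `(x₁,x₂)`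
with `x₁ cos θ + x₂ sin θ > 0` is attained and equals `ab/√(a² sin²θ + b² cos²θ)`. -/
theorem ray_speed_minimization
    (a b θ : ℝ) (ha : 0 < a) (hb : 0 < b)
    (hθ : θ ∈ Set.Icc (0 : ℝ) (Real.pi / 2)) :
    IsLeast
      {v : ℝ | ∃ x₁ x₂ : ℝ, x₁ ^ 2 + x₂ ^ 2 = 1 ∧
        0 < x₁ * Real.cos θ + x₂ * Real.sin θ ∧
        v = Real.sqrt (a ^ 2 * x₁ ^ 2 + b ^ 2 * x₂ ^ 2) /
              (x₁ * Real.cos θ + x₂ * Real.sin θ)}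
      (a * b / Real.sqrt (a ^ 2 * Real.sin θ ^ 2 + b ^ 2 * Real.cos θ ^ 2)) :=
  ray_speed_minimization_general a b θ ha hb
end
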